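/- The big q-Laguerre polynomial admits the alternative representation P_n(λ;a,b;q) = (q^{-n}/b;q)_n^{-1} · ₂φ₁(q^{-n}, aq/λ; aq; q, λ/b), i.e. ₃φ₂(q^{-n},0,λ; aq,bq; q,q) = (q^{-n}/b;q)_n^{-1} Σ_{k=0}^n (q^{-n};q)_k (aq/λ;q)_k (λ/b)^k / ((aq;q)_k (q;q)_k). -/

import Mathlib

noncomputable def qPoch (a q : ℝ) (n : ℕ) : ℝ := ∏ j ∈ Finset.range n, (1 - a * q ^ j)

noncomputable def bigqLaguerre (n : ℕ) (lam a b q : ℝ) : ℝ :=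
  ∑ k ∈ Finset.range (n + 1),
    (qPoch (q ^ (-(n : ℤ))) q k * qPoch lam q k * q ^ k) /
      (qPoch (a * q) q k * qPoch (b * q) q k * qPoch q q k)

open Finset

namespace BigQL

noncomputable def gauss (q : ℝ) : ℕ → ℕ → ℝ
  | 0, 0 => 1
  | 0, _+1 => 0
  | _+1, 0 => 1
  | r+1, i+1 => gauss q r (i+1) + q ^ (r - i) * gauss q r i

def tri (k : ℕ) : ℕ := ∑ j ∈ Finset.range k, j

lemma tri_succ (k : ℕ) : tri (k+1) = tri k + k := Finset.sum_range_succ _ _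

lemma tri_add (p r : ℕ) : tri (p + r) = tri p + tri r + p * r := by
  induction r with
  | zero => simp [tri]
  | succ r ih =>
    have h : p + (r + 1) = (p + r) + 1 := by omega
    rw [h, tri_succ, ih, tri_succ]; ring

lemma tri_sq (m : ℕ) : 2 * tri m + m = m * m := by
  induction m with
  | zero => simp [tri]
  | succ m ih => rw [tri_succ]; nlinarith [ih]

variable {q : ℝ}

lemma qPoch_zero (a : ℝ) : qPoch a q 0 = 1 := by simp [qPoch]

lemma qPoch_succ (a : ℝ) (k : ℕ) : qPoch a q (k+1) = qPoch a q k * (1 - a * q ^ k) :=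
  Finset.prod_range_succ _ _

lemma qPoch_succ' (a : ℝ) (k : ℕ) : qPoch a q (k+1) = (1 - a) * qPoch (a * q) q k := by
  rw [qPoch, Finset.prod_range_succ']
  simp only [pow_zero, mul_one, qPoch]
  rw [mul_comm]
  congr 1
  refine Finset.prod_congr rfl fun j _ => ?_
  ring

lemma qPoch_add (a : ℝ) (m r : ℕ) :
    qPoch a q (m + r) = qPoch a q m * qPoch (a * q ^ m) q r := by
  rw [qPoch, Finset.prod_range_add, qPoch, qPoch]
  congr 1
  refine Finset.prod_congr rfl fun j _ => ?_
  rw [pow_add]; ring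

lemma qq_pos (hq0 : 0 < q) (hq1 : q < 1) (k : ℕ) : 0 < qPoch q q k := by
  refine Finset.prod_pos fun j _ => ?_
  have h1 : q * q ^ j ≤ q * 1 := by
    have := pow_le_one₀ hq0.le hq1.le (n := j)
    nlinarith
  nlinarith

lemma qq_ne (hq0 : 0 < q) (hq1 : q < 1) (k : ℕ) : qPoch q q k ≠ 0 :=
  (qq_pos hq0 hq1 k).ne'

lemma qPoch_ne_prefix {a : ℝ} {n k : ℕ} (h : qPoch a q n ≠ 0) (hk : k ≤ n) :
    qPoch a q k ≠ 0 := by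
  obtain ⟨r, rfl⟩ := Nat.exists_eq_add_of_le hk
  rw [qPoch_add] at h
  exact fun h0 => h (by rw [h0, zero_mul])

lemma gauss_eq_zero {r i : ℕ} (h : r < i) : gauss q r i = 0 := by
  induction r generalizing i with
  | zero => match i, h with | i+1, _ => rfl
  | succ r ih =>
    match i, h with
    | i+1, h =>
      show gauss q r (i+1) + q ^ (r - i) * gauss q r i = 0
      rw [ih (by omega), ih (by omega), mul_zero, add_zero]

lemma gauss_zero_right (r : ℕ) : gauss q r 0 = 1 := by
  match r with | 0 => rfl | r+1 => rfl

lemma gauss_succ_succ (r i : ℕ) :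
    gauss q (r+1) (i+1) = gauss q r (i+1) + q ^ (r - i) * gauss q r i := rfl

-- L2 in multiplied form
lemma gauss_mul (hq0 : 0 < q) (hq1 : q < 1) :
    ∀ r i : ℕ, i ≤ r → gauss q r i * (qPoch q q i * qPoch q q (r - i)) = qPoch q q r := by
  intro r
  induction r with
  | zero => intro i hi; interval_cases i; simp [gauss_zero_right, qPoch_zero]
  | succ r ih =>
    intro i hi
    match i with
    | 0 => simp [gauss_zero_right, qPoch_zero]
    | i+1 =>
      rw [gauss_succ_succ, add_mul]
      rcases Nat.lt_or_ge r (i+1) with hr | hr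
      · -- i = r
        have hir : i = r := by omega
        subst hir
        rw [gauss_eq_zero (by omega), zero_mul, zero_add]
        have := ih i le_rfl
        rw [Nat.sub_self] at this ⊢
        have hg : gauss q i i = 1 := by
          have hne : qPoch q q i * qPoch q q 0 ≠ 0 := by
            simp [qPoch_zero, qq_ne hq0 hq1]
          field_simp [qPoch_zero] at this ⊢
          rw [qPoch_zero, mul_one] at this
          exact mul_right_cancel₀ (qq_ne hq0 hq1 i) (this.trans (one_mul _).symm)
        simp [Nat.sub_self, hg, qPoch_zero]
      · -- i+1 ≤ r
        obtain ⟨s, rfl⟩ : ∃ s, r = i + 1 + s := ⟨r - (i+1), by omega⟩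
        have h1 := ih (i+1) hr
        have h2 := ih i (by omega)
        have e1 : i + 1 + s + 1 - (i + 1) = s + 1 := by omega
        have e2 : i + 1 + s - i = s + 1 := by omega
        have e3 : i + 1 + s - (i + 1) = s := by omega
        rw [e3] at h1
        rw [show i + 1 + s - i = s + 1 from by omega] at h2
        rw [e1, e2, qPoch_succ q (i+1+s)]
        rw [qPoch_succ q s] at *
        rw [qPoch_succ q i] at *
        linear_combination (1 - q * q ^ s) * h1 + q ^ (s+1) * (1 - q * q ^ i) * h2

lemma qbinom_thm (x : ℝ) (r : ℕ) :
    qPoch x q r = ∑ i ∈ range (r+1), (-1)^i * q^(tri i) * gauss q r i * x^i := by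
  induction r with
  | zero => simp [qPoch_zero, tri, gauss_zero_right]
  | succ r ih =>
    have hext : (∑ i ∈ range (r+2), (-1:ℝ)^i * q^(tri i) * gauss q r i * x^i)
        = ∑ i ∈ range (r+1), (-1:ℝ)^i * q^(tri i) * gauss q r i * x^i := by
      rw [Finset.sum_range_succ, gauss_eq_zero (Nat.lt_succ_self r)]
      ring
    have key : ∀ i ∈ range (r+1),
        (-1:ℝ)^(i+1) * q^(tri (i+1)) * gauss q (r+1) (i+1) * x^(i+1)
        = (-1:ℝ)^(i+1) * q^(tri (i+1)) * gauss q r (i+1) * x^(i+1)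
          - (x*q^r) * ((-1:ℝ)^i * q^(tri i) * gauss q r i * x^i) := by
      intro i hi
      have hi' := mem_range.mp hi
      rw [gauss_succ_succ]
      have he : tri (i+1) + (r - i) = tri i + r := by rw [tri_succ]; omega
      have hpow : (q:ℝ)^(tri (i+1)) * q^(r-i) = q^(tri i) * q^r := by
        rw [← pow_add, ← pow_add, he]
      linear_combination ((-1:ℝ)^(i+1) * gauss q r i * x^(i+1)) * hpow
    have h2 : (∑ i ∈ range (r+1), (-1:ℝ)^(i+1)*q^(tri (i+1))*gauss q r (i+1)*x^(i+1))
        = (∑ i ∈ range (r+1), (-1:ℝ)^i*q^(tri i)*gauss q r i*x^i) - 1 := by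
      rw [← hext, Finset.sum_range_succ' (fun i => (-1:ℝ)^i*q^(tri i)*gauss q r i*x^i) (r+1)]
      simp [gauss_zero_right, tri]
    rw [qPoch_succ, ih,
        Finset.sum_range_succ' (fun i => (-1:ℝ)^i*q^(tri i)*gauss q (r+1) i*x^i) (r+1),
        Finset.sum_congr rfl key, Finset.sum_sub_distrib, h2, ← Finset.mul_sum]
    simp only [gauss_zero_right, tri, Finset.range_zero, Finset.sum_empty, pow_zero, mul_one,
      one_mul]
    ring

lemma qinv_poch (hq : q ≠ 0) {n : ℕ} : ∀ {k : ℕ}, k ≤ n →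
    qPoch (q ^ (-(n:ℤ))) q k * qPoch q q (n - k) * q ^ (n * k)
      = (-1)^k * q^(tri k) * qPoch q q n := by
  intro k
  induction k with
  | zero => intro _; simp [qPoch_zero, tri]
  | succ k ih =>
    intro hk
    have ihh := ih (by omega)
    have e1 : n - k = (n - (k+1)) + 1 := by omega
    rw [e1, qPoch_succ] at ihh
    have h1 : (q:ℝ) ^ k * q ^ (n-(k+1)) * q = q ^ n := by
      rw [mul_assoc, ← pow_succ, ← pow_add]
      congr 1; omega
    have hX : q ^ (-(n:ℤ)) * ((q:ℝ) ^ k * q ^ (n-(k+1)) * q) = 1 := by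
      rw [h1, ← zpow_natCast q n, ← zpow_add₀ hq]; simp
    rw [qPoch_succ, tri_succ, Nat.mul_succ, pow_add, ← h1]
    linear_combination (-(q^k)) * ihh
      - (qPoch (q ^ (-(n:ℤ))) q k * qPoch q q (n - (k+1)) * q ^ (n*k) * q^k) * hX


lemma qq_zero_lt {q : ℝ} (hq0 : 0 < q) (hq1 : q < 1) (k : ℕ) : qPoch q q k ≠ 0 := qq_ne hq0 hq1 k

lemma Lb (hq : q ≠ 0) {b : ℝ} (hb : b ≠ 0) (n : ℕ) :
    qPoch (b*q) q n = (-1)^n * b^n * q^(tri (n+1)) * qPoch (q ^ (-(n:ℤ)) / b) q n := by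
  have hterm : ∀ j ∈ range n,
      (1 - b*q*q^(n-1-j)) = (-(b * q^(n-j))) * (1 - q ^ (-(n:ℤ)) / b * q^j) := by
    intro j hj
    have hj' := mem_range.mp hj
    have h1 : (q:ℝ) * q^(n-1-j) = q^(n-j) := by
      rw [← pow_succ']; congr 1; omega
    have h2 : (q:ℝ)^(n-j) * q^j * q ^ (-(n:ℤ)) = 1 := by
      rw [← pow_add, show n - j + j = n from by omega, ← zpow_natCast q n, ← zpow_add₀ hq]
      simp
    have h4 : (q:ℝ)^(n-j) * q^j = q^n := by
      rw [← pow_add]; congr 1; omega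
    field_simp
    linear_combination (-b) * h1 - h2
  have hsum : ∑ j ∈ range n, (n - j) = tri (n+1) := by
    rw [tri, Finset.sum_range_succ' (fun j => j) n,
        ← Finset.sum_range_reflect (fun j => j + 1) n]
    simp only [add_zero]
    exact Finset.sum_congr rfl fun j hj => by have := mem_range.mp hj; omega
  calc qPoch (b*q) q n = ∏ j ∈ range n, (1 - b*q*q^(n-1-j)) :=
        (Finset.prod_range_reflect (fun j => 1 - b*q*q^j) n).symm
    _ = ∏ j ∈ range n, (-(b * q^(n-j))) * (1 - q ^ (-(n:ℤ)) / b * q^j) :=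
        Finset.prod_congr rfl hterm
    _ = (∏ j ∈ range n, (-(b * q^(n-j)))) * qPoch (q ^ (-(n:ℤ)) / b) q n := by
        rw [Finset.prod_mul_distrib]; rfl
    _ = (-1)^n * b^n * q^(tri (n+1)) * qPoch (q ^ (-(n:ℤ)) / b) q n := by
        congr 1
        have : ∀ j ∈ range n, (-(b * q^(n-j))) = (-1) * b * q^(n-j) := fun j _ => by ring
        rw [Finset.prod_congr rfl this, Finset.prod_mul_distrib, Finset.prod_mul_distrib,
          Finset.prod_const, Finset.prod_const, Finset.prod_pow_eq_pow_sum, hsum,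
          Finset.card_range]

lemma qPoch_shift_div (hq : q ≠ 0) (x : ℝ) (k : ℕ) :
    qPoch (x/q) q k = qPoch x q k - (x/q) * (1 - q^k) * qPoch x q (k-1) := by
  cases k with
  | zero => simp [qPoch_zero]
  | succ k =>
    rw [qPoch_succ', qPoch_succ, div_mul_cancel₀ x hq, Nat.add_sub_cancel]
    field_simp
    ring

lemma qPoch_qinv_self (hq : q ≠ 0) (m : ℕ) : qPoch (q ^ (-(m:ℤ))) q (m+1) = 0 := by
  apply Finset.prod_eq_zero (Finset.self_mem_range_succ m)
  rw [← zpow_natCast q m, ← zpow_add₀ hq]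
  simp

lemma qCV (hq0 : 0 < q) (hq1 : q < 1) : ∀ (m : ℕ) (B C : ℝ), B ≠ 0 → qPoch C q m ≠ 0 →
    (∑ k ∈ range (m+1),
        qPoch (q ^ (-(m:ℤ))) q k * qPoch B q k * q^k / (qPoch C q k * qPoch q q k))
      = qPoch (C/B) q m * B^m / qPoch C q m := by
  intro m
  have hq : q ≠ 0 := hq0.ne'
  induction m with
  | zero => intro B C _ _; simp [qPoch_zero]
  | succ m ih =>
    intro B C hB hC
    have hsplit : qPoch C q (m+1) = (1-C) * qPoch (C*q) q m := qPoch_succ' C m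
    have h1C : (1:ℝ) - C ≠ 0 := fun h => hC (by rw [hsplit, h, zero_mul])
    have hCq : qPoch (C*q) q m ≠ 0 := fun h => hC (by rw [hsplit, h, mul_zero])
    have hCm : qPoch C q m ≠ 0 := qPoch_ne_prefix hC (Nat.le_succ m)
    have hqm : q ^ (-(m:ℤ)) * (q:ℝ)^m = 1 := by
      rw [← zpow_natCast q m, ← zpow_add₀ hq]; simp
    have hdecomp : ∀ k : ℕ, qPoch (q ^ (-((m+1 : ℕ):ℤ))) q k
        = qPoch (q ^ (-(m:ℤ))) q k
          - (q ^ (-(m:ℤ))/q) * (1 - q^k) * qPoch (q ^ (-(m:ℤ))) q (k-1) := by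
      intro k
      have hx : (q:ℝ) ^ (-((m+1 : ℕ):ℤ)) = q ^ (-(m:ℤ)) / q := by
        push_cast
        rw [neg_add, zpow_add₀ hq, zpow_neg_one]
        rfl
      rw [hx, qPoch_shift_div hq]
    have hL : (∑ k ∈ range (m+1+1),
          qPoch (q ^ (-((m+1 : ℕ):ℤ))) q k * qPoch B q k * q^k / (qPoch C q k * qPoch q q k))
        = (∑ k ∈ range (m+2),
            qPoch (q ^ (-(m:ℤ))) q k * qPoch B q k * q^k / (qPoch C q k * qPoch q q k))
          - ∑ k ∈ range (m+2),
              (q ^ (-(m:ℤ))/q) * (1 - q^k) * qPoch (q ^ (-(m:ℤ))) q (k-1)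
                * qPoch B q k * q^k / (qPoch C q k * qPoch q q k) := by
      rw [← Finset.sum_sub_distrib]
      refine Finset.sum_congr rfl fun k _ => ?_
      rw [hdecomp k]
      ring
    have hS1 : (∑ k ∈ range (m+2),
          qPoch (q ^ (-(m:ℤ))) q k * qPoch B q k * q^k / (qPoch C q k * qPoch q q k))
        = qPoch (C/B) q m * B^m / qPoch C q m := by
      rw [Finset.sum_range_succ, qPoch_qinv_self hq m]
      rw [zero_mul, zero_mul, zero_div, add_zero]
      exact ih B C hB hCm
    have hS2 : (∑ k ∈ range (m+2),
          (q ^ (-(m:ℤ))/q) * (1 - q^k) * qPoch (q ^ (-(m:ℤ))) q (k-1)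
            * qPoch B q k * q^k / (qPoch C q k * qPoch q q k))
        = q ^ (-(m:ℤ)) * (1-B)/(1-C) * (qPoch (C/B) q m * (B*q)^m / qPoch (C*q) q m) := by
      rw [Finset.sum_range_succ' _ (m+1)]
      have h0 : (q ^ (-(m:ℤ))/q) * (1 - q^(0:ℕ)) * qPoch (q ^ (-(m:ℤ))) q (0-1)
          * qPoch B q 0 * q^(0:ℕ) / (qPoch C q 0 * qPoch q q 0) = 0 := by
        simp
      rw [h0, add_zero]
      have hterm : ∀ k ∈ range (m+1),
          (q ^ (-(m:ℤ))/q) * (1 - q^(k+1)) * qPoch (q ^ (-(m:ℤ))) q (k+1-1)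
            * qPoch B q (k+1) * q^(k+1) / (qPoch C q (k+1) * qPoch q q (k+1))
          = (q ^ (-(m:ℤ)) * (1-B)/(1-C)) *
              (qPoch (q ^ (-(m:ℤ))) q k * qPoch (B*q) q k * q^k
                / (qPoch (C*q) q k * qPoch q q k)) := by
        intro k hk
        have hk' := mem_range.mp hk
        have hCqk : qPoch (C*q) q k ≠ 0 := qPoch_ne_prefix hCq (by omega)
        have hQk : qPoch q q k ≠ 0 := qq_ne hq0 hq1 k
        have hfac : (1:ℝ) - q*q^k ≠ 0 := by
          intro h
          exact qq_ne hq0 hq1 (k+1) (by rw [qPoch_succ, h, mul_zero])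
        rw [Nat.add_sub_cancel, qPoch_succ' B k, qPoch_succ' C k, qPoch_succ q k,
          pow_succ' q k]
        field_simp
      rw [Finset.sum_congr rfl hterm, ← Finset.mul_sum,
        ih (B*q) (C*q) (mul_ne_zero hB hq) hCq]
      rw [show C*q/(B*q) = C/B from mul_div_mul_right C B hq]
    rw [hL, hS1, hS2]
    rw [qPoch_succ (C/B) m, hsplit, mul_pow]
    set P := qPoch (C/B) q m with hP
    set R := qPoch C q m with hR
    set R' := qPoch (C*q) q m with hR'
    set X := q ^ (-(m:ℤ)) with hX
    have hRR : R * (1 - C*q^m) = (1-C) * R' := by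
      rw [hR, hR', ← qPoch_succ, ← qPoch_succ']
    field_simp
    linear_combination (-(P*B^m*B*R*(1-B))) * hqm - (P*B^m*B) * hRR

lemma Klem (hq0 : 0 < q) (hq1 : q < 1) {n m k : ℕ} (hk : k ≤ m) (hm : m ≤ n) :
    qPoch (q ^ (-(n:ℤ))) q k * gauss q (n-k) (n-m) * q^(k*(n-m))
      * (qPoch q q (n-m) * qPoch q q m)
    = qPoch q q n * qPoch (q ^ (-(m:ℤ))) q k := by
  have hq : q ≠ 0 := ne_of_gt hq0
  have h1 := qinv_poch (n := n) hq (le_trans hk hm)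
  have h2 := qinv_poch (n := m) hq hk
  have h3 := gauss_mul hq0 hq1 (n-k) (n-m) (by omega)
  rw [show n - k - (n-m) = m - k from by omega] at h3
  have hexp : k*(n-m) + m*k = n*k := by
    have h4 : n - m + m = n := by omega
    calc k*(n-m) + m*k = k*((n-m) + m) := by ring
      _ = n*k := by rw [h4]; ring
  apply mul_right_cancel₀ (mul_ne_zero (qq_ne hq0 hq1 (m-k)) (pow_ne_zero (m*k) hq))
  calc qPoch (q ^ (-(n:ℤ))) q k * gauss q (n-k) (n-m) * q^(k*(n-m))
        * (qPoch q q (n-m) * qPoch q q m) * (qPoch q q (m-k) * q^(m*k))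
      = gauss q (n-k) (n-m) * (qPoch q q (n-m) * qPoch q q (m-k))
          * (qPoch (q ^ (-(n:ℤ))) q k * (q^(k*(n-m)) * q^(m*k))) * qPoch q q m := by ring
    _ = qPoch q q (n-k) * (qPoch (q ^ (-(n:ℤ))) q k * q^(n*k)) * qPoch q q m := by
        rw [h3, ← pow_add, hexp]
    _ = (qPoch (q ^ (-(n:ℤ))) q k * qPoch q q (n-k) * q^(n*k)) * qPoch q q m := by ring
    _ = ((-1)^k * q^(tri k) * qPoch q q n) * qPoch q q m := by rw [h1]
    _ = qPoch q q n * (qPoch (q ^ (-(m:ℤ))) q k * qPoch q q (m-k) * q^(m*k)) := by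
        rw [h2]; ring
    _ = qPoch q q n * qPoch (q ^ (-(m:ℤ))) q k * (qPoch q q (m-k) * q^(m*k)) := by ring

lemma tri_exp {n m i : ℕ} (h : n = m + i) : tri i + i + n*m = tri m + tri (n+1) := by
  subst h
  rw [show m + i + 1 = m + (i+1) from rfl, tri_add, tri_succ]
  have h2 := tri_sq m
  nlinarith [h2]

end BigQL

open BigQL

theorem bigqLaguerre_as_2phi1 (q a b lam : ℝ) (hq0 : 0 < q) (hq1 : q < 1)
    (ha : a ≠ 0) (hb : b ≠ 0) (hlam : lam ≠ 0) (n : ℕ)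
    (haq : ∀ k ≤ n, qPoch (a * q) q k ≠ 0) (hbq : ∀ k ≤ n, qPoch (b * q) q k ≠ 0)
    (hnb : qPoch (q ^ (-(n : ℤ)) / b) q n ≠ 0) :
    bigqLaguerre n lam a b q =
      (qPoch (q ^ (-(n : ℤ)) / b) q n)⁻¹ *
        ∑ k ∈ Finset.range (n + 1),
          (qPoch (q ^ (-(n : ℤ))) q k * qPoch (a * q / lam) q k * (lam / b) ^ k) /
            (qPoch (a * q) q k * qPoch q q k) := by
  have hq : q ≠ 0 := ne_of_gt hq0
  have hQ : ∀ k, qPoch q q k ≠ 0 := qq_ne hq0 hq1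
  refine mul_right_cancel₀ (hbq n le_rfl) ?_
  set M : ℝ := ∑ i ∈ Finset.range (n+1),
      (-1:ℝ)^i * q^(tri i + i) * b^i * (qPoch q q n / (qPoch q q i * qPoch q q (n-i)))
        * (qPoch (a*q/lam) q (n-i) * lam^(n-i) / qPoch (a*q) q (n-i)) with hM
  have hL : bigqLaguerre n lam a b q * qPoch (b*q) q n = M := by
    rw [bigqLaguerre, Finset.sum_mul]
    have step1 : ∀ k ∈ Finset.range (n+1),
        (qPoch (q ^ (-(n:ℤ))) q k * qPoch lam q k * q ^ k) /
            (qPoch (a*q) q k * qPoch (b*q) q k * qPoch q q k) * qPoch (b*q) q n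
        = ∑ i ∈ Finset.range (n+1),
            (qPoch (q ^ (-(n:ℤ))) q k * qPoch lam q k * q ^ k) /
              (qPoch (a*q) q k * qPoch q q k)
            * ((-1)^i * q^(tri i) * gauss q (n-k) i * (b*q*q^k)^i) := by
      intro k hk
      have hk' : k ≤ n := by have := Finset.mem_range.mp hk; omega
      have hsplitB : qPoch (b*q) q n = qPoch (b*q) q k * qPoch (b*q*q^k) q (n-k) := by
        have h := qPoch_add (q := q) (b*q) k (n-k)
        rw [show k + (n-k) = n from by omega] at h
        rw [h, mul_assoc]
      rw [hsplitB, qbinom_thm (b*q*q^k) (n-k)]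
      have hsub : (∑ i ∈ Finset.range (n-k+1),
            (-1:ℝ)^i * q^(tri i) * gauss q (n-k) i * (b*q*q^k)^i)
          = ∑ i ∈ Finset.range (n+1),
            (-1:ℝ)^i * q^(tri i) * gauss q (n-k) i * (b*q*q^k)^i := by
        refine Finset.sum_subset (Finset.range_subset_range.mpr (by omega)) fun i _ hni => ?_
        rw [gauss_eq_zero (by simp only [Finset.mem_range, not_lt] at hni; omega)]
        ring
      rw [hsub, Finset.mul_sum, Finset.mul_sum]
      refine Finset.sum_congr rfl fun i _ => ?_
      have hA := haq k hk'
      have hB := hbq k hk'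
      have hQk := hQ k
      field_simp
      rw [mul_comm q b, mul_right_comm _ (qPoch (b*q) q k), mul_div_cancel_right₀ _ hB]
    rw [Finset.sum_congr rfl step1, Finset.sum_comm, hM]
    refine Finset.sum_congr rfl fun i hi => ?_
    have hi' : i ≤ n := by have := Finset.mem_range.mp hi; omega
    have him : n - i ≤ n := by omega
    have hres : (∑ k ∈ Finset.range (n+1),
          (qPoch (q ^ (-(n:ℤ))) q k * qPoch lam q k * q ^ k) /
            (qPoch (a*q) q k * qPoch q q k)
          * ((-1)^i * q^(tri i) * gauss q (n-k) i * (b*q*q^k)^i))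
        = ∑ k ∈ Finset.range (n-i+1),
          (qPoch (q ^ (-(n:ℤ))) q k * qPoch lam q k * q ^ k) /
            (qPoch (a*q) q k * qPoch q q k)
          * ((-1)^i * q^(tri i) * gauss q (n-k) i * (b*q*q^k)^i) := by
      refine (Finset.sum_subset (Finset.range_subset_range.mpr (by omega)) fun k hkm hnk => ?_).symm
      rw [gauss_eq_zero (by
        simp only [Finset.mem_range, not_lt] at hnk
        have := Finset.mem_range.mp hkm; omega)]
      ring
    rw [hres]
    have hterm : ∀ k ∈ Finset.range (n-i+1),
        (qPoch (q ^ (-(n:ℤ))) q k * qPoch lam q k * q ^ k) /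
            (qPoch (a*q) q k * qPoch q q k)
          * ((-1)^i * q^(tri i) * gauss q (n-k) i * (b*q*q^k)^i)
        = ((-1:ℝ)^i * q^(tri i + i) * b^i
              * (qPoch q q n / (qPoch q q i * qPoch q q (n-i))))
            * (qPoch (q ^ (-((n-i : ℕ):ℤ))) q k * qPoch lam q k * q^k
                / (qPoch (a*q) q k * qPoch q q k)) := by
      intro k hk
      have hk' : k ≤ n - i := by have := Finset.mem_range.mp hk; omega
      have KL : qPoch (q ^ (-(n:ℤ))) q k * gauss q (n-k) i * q^(k*i)
            * (qPoch q q i * qPoch q q (n-i))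
          = qPoch q q n * qPoch (q ^ (-((n-i:ℕ):ℤ))) q k := by
        have h := Klem hq0 hq1 hk' him
        rw [show n - (n-i) = i from by omega] at h
        exact h
      have hpw : (b*q*q^k)^i = b^i * q^i * q^(k*i) := by
        rw [mul_pow, mul_pow, ← pow_mul]
      have hA := haq k (le_trans hk' him)
      have hQk := hQ k
      have hQi := hQ i
      have hQm := hQ (n-i)
      rw [hpw]
      set X := qPoch (q ^ (-(n:ℤ))) q k with hXd
      set Y := qPoch (q ^ (-((n-i:ℕ):ℤ))) q k with hYd
      field_simp
      linear_combination (qPoch lam q k * q^(tri i) * q^i) * KL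
    rw [Finset.sum_congr rfl hterm, ← Finset.mul_sum,
      qCV hq0 hq1 (n-i) lam (a*q) hlam (haq (n-i) him)]
  have hR : ((qPoch (q ^ (-(n : ℤ)) / b) q n)⁻¹ *
        ∑ k ∈ Finset.range (n + 1),
          (qPoch (q ^ (-(n : ℤ))) q k * qPoch (a * q / lam) q k * (lam / b) ^ k) /
            (qPoch (a * q) q k * qPoch q q k)) * qPoch (b*q) q n = M := by
    rw [Lb (q := q) hq hb n]
    have e : ((qPoch (q ^ (-(n:ℤ)) / b) q n)⁻¹ * (∑ k ∈ Finset.range (n + 1),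
          (qPoch (q ^ (-(n:ℤ))) q k * qPoch (a*q/lam) q k * (lam/b)^k) /
            (qPoch (a*q) q k * qPoch q q k)))
          * ((-1:ℝ)^n * b^n * q^(tri (n+1)) * qPoch (q ^ (-(n:ℤ)) / b) q n)
        = (∑ k ∈ Finset.range (n+1),
            (qPoch (q ^ (-(n:ℤ))) q k * qPoch (a*q/lam) q k * (lam/b)^k) /
              (qPoch (a*q) q k * qPoch q q k)) * ((-1:ℝ)^n * b^n * q^(tri (n+1))) := by
      have h2 : ∀ S c : ℝ, ((qPoch (q ^ (-(n:ℤ)) / b) q n)⁻¹ * S)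
            * (c * qPoch (q ^ (-(n:ℤ)) / b) q n)
          = S * c * (qPoch (q ^ (-(n:ℤ)) / b) q n * (qPoch (q ^ (-(n:ℤ)) / b) q n)⁻¹) := by
        intro S c; ring
      rw [show ((-1:ℝ)^n * b^n * q^(tri (n+1)) * qPoch (q ^ (-(n:ℤ)) / b) q n)
          = ((-1:ℝ)^n * b^n * q^(tri (n+1))) * qPoch (q ^ (-(n:ℤ)) / b) q n from by ring,
        h2, mul_inv_cancel₀ hnb, mul_one]
    rw [e, Finset.sum_mul, ← Finset.sum_range_reflect (fun m =>
      (qPoch (q ^ (-(n:ℤ))) q m * qPoch (a*q/lam) q m * (lam/b)^m) /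
        (qPoch (a*q) q m * qPoch q q m) * ((-1:ℝ)^n * b^n * q^(tri (n+1)))) (n+1), hM]
    simp only [Nat.add_sub_cancel]
    refine Finset.sum_congr rfl fun i hi => ?_
    have hi' : i ≤ n := by have := Finset.mem_range.mp hi; omega
    have him : n - i ≤ n := by omega
    have hqp := qinv_poch (q := q) (n := n) hq him
    rw [show n - (n-i) = i from by omega] at hqp
    set X := qPoch (q ^ (-(n:ℤ))) q (n-i) with hXd
    have hpar : ((-1:ℝ))^n * (-1)^(n-i) = (-1)^i := by
      have h1 : (-1:ℝ)^n = (-1)^(n-i) * (-1)^i := by rw [← pow_add]; congr 1; omega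
      have h2 : ((-1:ℝ)^(n-i))^2 = 1 := by
        rw [← pow_mul, mul_comm, pow_mul]; norm_num
      calc ((-1:ℝ))^n * (-1)^(n-i) = ((-1:ℝ)^(n-i))^2 * (-1)^i := by rw [h1]; ring
        _ = (-1)^i := by rw [h2]; ring
    have hexp2 : (q:ℝ)^(tri (n+1)) * q^(tri (n-i)) = q^(tri i + i) * q^(n*(n-i)) := by
      rw [← pow_add, ← pow_add]
      have h := tri_exp (n := n) (m := n-i) (i := i) (by omega)
      congr 1
      linarith [h]
    have hscal : X * qPoch q q i * ((-1:ℝ)^n * q^(tri (n+1)))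
        = (-1)^i * q^(tri i + i) * qPoch q q n := by
      refine mul_right_cancel₀ (pow_ne_zero (n*(n-i)) hq) ?_
      calc X * qPoch q q i * ((-1:ℝ)^n * q^(tri (n+1))) * q^(n*(n-i))
          = ((-1:ℝ)^n * q^(tri (n+1))) * (X * qPoch q q i * q^(n*(n-i))) := by ring
        _ = ((-1:ℝ)^n * q^(tri (n+1))) * ((-1)^(n-i) * q^(tri (n-i)) * qPoch q q n) := by
            rw [hqp]
        _ = (-1)^i * q^(tri i + i) * qPoch q q n * q^(n*(n-i)) := by
            linear_combination ((-1:ℝ)^n * (-1:ℝ)^(n-i) * qPoch q q n) * hexp2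
              + (q^(tri i + i) * q^(n*(n-i)) * qPoch q q n) * hpar
    have hA := haq (n-i) him
    have hQi := hQ i
    have hQm := hQ (n-i)
    have hbpow : (b:ℝ)^n = b^(n-i) * b^i := by rw [← pow_add]; congr 1; omega
    rw [hbpow, div_pow]
    field_simp
    linear_combination (qPoch (a*q/lam) q (n-i)) * hscal
  rw [hL, hR]
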